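/- arXiv:2211.15125 — 2 statements merged into one kernel-verified Lean document; each statement's English description precedes it below -/
import Mathlib

section
/- If the pointwise normalized process Y*(t) has the same distribution F_S for all t ∈ T, and D is affine invariant, then the depth cdfs coincide: Ψ_X(r) = Ψ_{X*}(r) for all r ∈ [0,1], where Ψ_X(r) = ∫_T 1{D(X(t); F_{Y(t)}) ≤ r} dt and Ψ_{X*}(r) = ∫_T 1{D(X*(t); F_S) ≤ r} dt. Consequently, the global multivariate functional extremal depth equals the local multivariate functional extremal depth. -/
/-! Since `F_S` is the image of `F(t)` under the normalizing affine map at `t`, affine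
invariance makes the normalized depth of any curve equal to its original depth at every
`t ∈ T`; the sublevel sets in `T`, hence all depth cdfs and every comparison built from them,
agree. -/

open MeasureTheory Matrix

/-- The depth cdf `Ψ_X(r) = ∫_T 1{d(t) ≤ r} dt` of a pointwise-depth function `d` on
the time domain `T`. -/
noncomputable def depthCDF (T : Set ℝ) (d : ℝ → ℝ) (r : ℝ) : ℝ :=
  (volume {t | t ∈ T ∧ d t ≤ r}).toReal

/-- `X ≺ Y` ("X is more extreme than Y") in terms of depth cdfs: there is `r ∈ (0,1)`
with `Ψ_X = Ψ_Y` on `[0, r)` and `Ψ_X(r) > Ψ_Y(r)`. -/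
def precCDF (Ψ Φ : ℝ → ℝ) : Prop :=
  ∃ r ∈ Set.Ioo (0:ℝ) 1, (∀ u, 0 ≤ u → u < r → Ψ u = Φ u) ∧ Φ r < Ψ r

def IsAffineInvariantDepth {n : Type*} [Fintype n] [DecidableEq n]
    (D : (n → ℝ) → Measure (n → ℝ) → ℝ) : Prop :=
  ∀ (A : Matrix n n ℝ) (b : n → ℝ) (μ : Measure (n → ℝ)), IsUnit A.det →
    ∀ x : n → ℝ, D (A *ᵥ x + b) (μ.map fun y => A *ᵥ y + b) = D x μ

theorem IsAffineInvariantDepth.apply_mulVec_sub {n : Type*} [Fintype n] [DecidableEq n]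
    {D : (n → ℝ) → Measure (n → ℝ) → ℝ} (hD : IsAffineInvariantDepth D)
    {A : Matrix n n ℝ} (hA : IsUnit A.det) (m x : n → ℝ) (μ : Measure (n → ℝ)) :
    D (A *ᵥ (x - m)) (μ.map fun y => A *ᵥ (y - m)) = D x μ := by
  have hnormalize : ∀ y, A *ᵥ (y - m) = A *ᵥ y + -(A *ᵥ m) := fun y => by
    rw [mulVec_sub, sub_eq_add_neg]
  simp only [hnormalize]
  exact hD A _ μ hA x

theorem depthCDF_congr {T : Set ℝ} {d e : ℝ → ℝ} (h : Set.EqOn d e T) :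
    depthCDF T d = depthCDF T e := by
  funext r
  unfold depthCDF
  congr 2
  ext t
  exact and_congr_right fun ht => by rw [h ht]

/-- If the pointwise normalized process `Y*(t)` has the same distribution
`F_S` for all `t ∈ T`, and `D` is affine invariant, then the depth cdfs coincide:
`Ψ_X(r) = Ψ_{X*}(r)` for all `r ∈ [0,1]`. Consequently, the global multivariate
functional extremal depth (defined from the normalized pointwise depths) equals the local
multivariate functional extremal depth (defined from the original pointwise depths):
the probability that `X` is not more extreme than a random curve `Y` is the same in
both versions. -/
theorem stmt3 {p : ℕ} (T : Set ℝ)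
    (D : (Fin p → ℝ) → Measure (Fin p → ℝ) → ℝ)
    (haff : ∀ (A : Matrix (Fin p) (Fin p) ℝ) (b : Fin p → ℝ)
      (μ : Measure (Fin p → ℝ)), IsUnit A.det →
      ∀ x : Fin p → ℝ,
        D (A.mulVec x + b) (Measure.map (fun y => A.mulVec y + b) μ) = D x μ)
    (F : ℝ → Measure (Fin p → ℝ)) (μv : ℝ → Fin p → ℝ)
    (R : ℝ → Matrix (Fin p) (Fin p) ℝ) (hR : ∀ t, IsUnit (R t).det)
    (FS : Measure (Fin p → ℝ))
    (hFS : ∀ t ∈ T, Measure.map (fun y => (R t).mulVec (y - μv t)) (F t) = FS)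
    (X : ℝ → Fin p → ℝ) :
    (∀ r ∈ Set.Icc (0:ℝ) 1,
        depthCDF T (fun t => D (X t) (F t)) r
          = depthCDF T (fun t => D ((R t).mulVec (X t - μv t)) FS) r)
    ∧ ∀ P : Measure (ℝ → Fin p → ℝ),
        P {Y | ¬ precCDF (depthCDF T (fun t => D (X t) (F t)))
                         (depthCDF T (fun t => D (Y t) (F t)))}
        = P {Y | ¬ precCDF (depthCDF T (fun t => D ((R t).mulVec (X t - μv t)) FS))
                           (depthCDF T (fun t => D ((R t).mulVec (Y t - μv t)) FS))} := by
  have hcdf : ∀ Z : ℝ → Fin p → ℝ, depthCDF T (fun t => D (Z t) (F t))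
      = depthCDF T (fun t => D ((R t).mulVec (Z t - μv t)) FS) := fun Z =>
    depthCDF_congr fun t ht => by
      rw [← hFS t ht]
      exact ((show IsAffineInvariantDepth D from haff).apply_mulVec_sub (hR t) _ _ _).symm
  exact ⟨fun r _ => by rw [hcdf X], fun P => by simp only [hcdf]⟩
end

section
/- If D is monotone relative to the deepest point (i.e., D(θ + a(x − θ); F) ≥ D(x; F) for a ∈ [0,1] where θ is the deepest point of F), then GMFID is monotone relative to the deepest curve: GMFID(Θ + a(X − Θ); F_Y, β) ≥ GMFID(X; F_Y, β) for all a ∈ [0,1], where Θ(t) is the pointwise deepest point. -/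
open MeasureTheory Matrix

/-! The standardization `x ↦ R t (x - μ t)` is affine, so it maps the segment from `Θ t` to
`X t` onto the segment from the deepest point `Θ*(t)` to `X*(t)`. Monotonicity of `D` along
such segments and `w ≥ 0` give the inequality of the integrands at every `t ∈ T`, and
integrating preserves it. -/

section

variable {α : Type*} [MeasurableSpace α] {μ : Measure α} {s : Set α}

/-- Unlike `ae_restrict_of_forall_mem`, `s` need not be measurable: for a non-measurable `s`,
`sᶜ` may have positive `μ.restrict s`-measure, so measurability of `{x | p x}` is needed. -/
theorem ae_restrict_of_forall_mem_of_nullMeasurableSet {p : α → Prop}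
    (hp : NullMeasurableSet {x | p x} (μ.restrict s)) (h : ∀ x ∈ s, p x) :
    ∀ᵐ x ∂μ.restrict s, p x := by
  obtain ⟨t, hts, ht, ht_ae⟩ := hp.compl.exists_measurable_subset_ae_eq
  have hts_disj : t ∩ s = ∅ :=
    Set.eq_empty_of_forall_notMem fun x hx => hts hx.1 (h x hx.2)
  rw [ae_iff, ← Set.compl_ofPred, ← measure_congr ht_ae, Measure.restrict_apply ht, hts_disj,
    measure_empty]

theorem setIntegral_mono_on' {f g : α → ℝ} (hf : IntegrableOn f s μ) (hg : IntegrableOn g s μ)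
    (h : ∀ x ∈ s, f x ≤ g x) :
    ∫ x in s, f x ∂μ ≤ ∫ x in s, g x ∂μ :=
  integral_mono_ae hf hg <| ae_restrict_of_forall_mem_of_nullMeasurableSet
    (nullMeasurableSet_le hf.aemeasurable hg.aemeasurable) h

end

theorem Matrix.mulVec_add_smul_sub_sub {n R : Type*} [Fintype n] [CommRing R]
    (A : Matrix n n R) (θ x m : n → R) (a : R) :
    A *ᵥ (θ + a • (x - θ) - m) = A *ᵥ (θ - m) + a • (A *ᵥ (x - m) - A *ᵥ (θ - m)) := by
  rw [← mulVec_sub, ← mulVec_smul, ← mulVec_add, sub_sub_sub_cancel_right]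
  abel_nf

theorem stmt6_general {p : ℕ} (T : Set ℝ)
    (D : (Fin p → ℝ) → Measure (Fin p → ℝ) → ℝ)
    (FS : Measure (Fin p → ℝ))
    (μv : ℝ → Fin p → ℝ) (R : ℝ → Matrix (Fin p) (Fin p) ℝ)
    (Θ : ℝ → Fin p → ℝ)   -- pointwise deepest curve
    (hmono : ∀ t ∈ T, ∀ x : Fin p → ℝ, ∀ a : ℝ, a ∈ Set.Icc (0:ℝ) 1 →
        D x FS ≤ D ((R t).mulVec (Θ t - μv t)
                      + a • (x - (R t).mulVec (Θ t - μv t))) FS)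
    (w : ℝ → ℝ) (hw : ∀ t, 0 ≤ w t)
    (X : ℝ → Fin p → ℝ) (a : ℝ) (ha : a ∈ Set.Icc (0:ℝ) 1)
    (hInt1 : IntegrableOn (fun t => D ((R t).mulVec (X t - μv t)) FS * w t) T volume)
    (hInt2 : IntegrableOn
        (fun t => D ((R t).mulVec ((Θ t + a • (X t - Θ t)) - μv t)) FS * w t) T volume) :
    (∫ t in T, D ((R t).mulVec (X t - μv t)) FS * w t)
      ≤ ∫ t in T, D ((R t).mulVec ((Θ t + a • (X t - Θ t)) - μv t)) FS * w t := by
  refine setIntegral_mono_on' hInt1 hInt2 fun t ht => ?_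
  rw [mulVec_add_smul_sub_sub]
  exact mul_le_mul_of_nonneg_right (hmono t ht _ a ha) (hw t)

/-- If `D` is monotone relative to the deepest point (i.e.
`D(θ + a(x − θ); F) ≥ D(x; F)` for `a ∈ [0,1]`, `θ` the deepest point of `F`), then
GMFID is monotone relative to the deepest curve:
`GMFID(Θ + a(X − Θ); F_Y, β) ≥ GMFID(X; F_Y, β)` for all `a ∈ [0,1]`, where `Θ(t)` is the
pointwise deepest point.

Here `GMFID(X) = ∫_T D(X*(t); F_S) w_β(t) dt` with `X*(t) = R t (X(t) − μ(t))` linear in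
`X(t)`, and `Θ*(t) = R t (Θ(t) − μ(t))` is the deepest point of `F_S` for each `t`. -/
theorem stmt6 {p : ℕ} (T : Set ℝ)
    (D : (Fin p → ℝ) → Measure (Fin p → ℝ) → ℝ)
    (FS : Measure (Fin p → ℝ))
    (μv : ℝ → Fin p → ℝ) (R : ℝ → Matrix (Fin p) (Fin p) ℝ)
    (Θ : ℝ → Fin p → ℝ)   -- pointwise deepest curve
    (hdeep : ∀ t ∈ T, ∀ x : Fin p → ℝ,
        D x FS ≤ D ((R t).mulVec (Θ t - μv t)) FS)
    (hmono : ∀ t ∈ T, ∀ x : Fin p → ℝ, ∀ a : ℝ, a ∈ Set.Icc (0:ℝ) 1 →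
        D x FS ≤ D ((R t).mulVec (Θ t - μv t)
                      + a • (x - (R t).mulVec (Θ t - μv t))) FS)
    (w : ℝ → ℝ) (hw : ∀ t, 0 ≤ w t)
    (X : ℝ → Fin p → ℝ) (a : ℝ) (ha : a ∈ Set.Icc (0:ℝ) 1)
    (hInt1 : IntegrableOn (fun t => D ((R t).mulVec (X t - μv t)) FS * w t) T volume)
    (hInt2 : IntegrableOn
        (fun t => D ((R t).mulVec ((Θ t + a • (X t - Θ t)) - μv t)) FS * w t) T volume) :
    (∫ t in T, D ((R t).mulVec (X t - μv t)) FS * w t)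
      ≤ ∫ t in T, D ((R t).mulVec ((Θ t + a • (X t - Θ t)) - μv t)) FS * w t :=
  stmt6_general T D FS μv R Θ hmono w hw X a ha hInt1 hInt2
end
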